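/- arXiv:1510.08276 — 6 statements merged into one kernel-verified Lean document; each statement's English description precedes it below -/
import Mathlib

section
/- Let G be a finite simple graph and X ⊆ V(G) a vertex set such that the subgraph of G induced by X is isomorphic to a member of F. Then opt_asso(G − X) ≤ opt_asso(G) − 2. -/
open SimpleGraph

/-- `M` is a module of `G`: every vertex outside `M` is adjacent to all
vertices of `M` or to none of them. -/
def IsModule {V : Type*} (G : SimpleGraph V) (M : Set V) : Prop :=
  ∀ x ∉ M, (∀ a ∈ M, G.Adj x a) ∨ (∀ a ∈ M, ¬ G.Adj x a)

/-- A module is strong if it overlaps no other module. -/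
def IsStrongModule {V : Type*} (G : SimpleGraph V) (M : Set V) : Prop :=
  IsModule G M ∧
    ∀ M' : Set V, IsModule G M' → (M ∩ M').Nonempty → M ⊆ M' ∨ M' ⊆ M

/-- A nonempty strong module ≠ V(G) whose only proper strong superset is V(G). -/
def IsMaximalStrongModule {V : Type*} (G : SimpleGraph V) (M : Set V) : Prop :=
  IsStrongModule G M ∧ M.Nonempty ∧ M ≠ Set.univ ∧
    ∀ M' : Set V, IsStrongModule G M' → M ⊂ M' → M' = Set.univ

/-- Quotient graph defined by a family `P` of vertex sets: two members are
adjacent iff they are distinct and completely adjacent in `G`. -/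
def QuotientOn {V : Type*} (G : SimpleGraph V) (P : Set (Set V)) : SimpleGraph P where
  Adj A B := A ≠ B ∧ ∀ a ∈ (A : Set V), ∀ b ∈ (B : Set V), G.Adj a b
  symm := by
    constructor
    intro A B h
    exact ⟨Ne.symm h.1, fun b hb a ha => (h.2 a ha b hb).symm⟩
  loopless := by
    constructor
    intro A h
    exact h.1 rfl

/-- The quotient graph Q̃(G), on the maximal strong modules of `G`. -/
def QuotientGraph {V : Type*} (G : SimpleGraph V) :
    SimpleGraph {M : Set V | IsMaximalStrongModule G M} :=
  QuotientOn G {M : Set V | IsMaximalStrongModule G M}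

/-- A graph is prime if it has at least four vertices and all its modules are
trivial (empty, singletons, or the whole vertex set). -/
def IsPrimeGraph {W : Type*} (H : SimpleGraph W) : Prop :=
  4 ≤ Nat.card W ∧
    ∀ M : Set W, IsModule H M → M = ∅ ∨ M = Set.univ ∨ ∃ w, M = {w}

/-- `G` contains an induced copy of `H`. -/
def HasInducedCopy {W V : Type*} (H : SimpleGraph W) (G : SimpleGraph V) : Prop :=
  ∃ f : W ↪ V, ∀ a b : W, G.Adj (f a) (f b) ↔ H.Adj a b

/-- The path on four vertices. -/
def GraphP4 : SimpleGraph (Fin 4) :=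
  SimpleGraph.fromRel fun a b =>
    (a, b) ∈ ([(0, 1), (1, 2), (2, 3)] : List (Fin 4 × Fin 4))

/-- The cycle on four vertices. -/
def GraphC4 : SimpleGraph (Fin 4) :=
  SimpleGraph.fromRel fun a b =>
    (a, b) ∈ ([(0, 1), (1, 2), (2, 3), (0, 3)] : List (Fin 4 × Fin 4))

/-- The bull: triangle 0,1,2 with pendant 3 at 0 and pendant 4 at 2. -/
def GraphBull : SimpleGraph (Fin 5) :=
  SimpleGraph.fromRel fun a b =>
    (a, b) ∈ ([(0, 1), (0, 2), (1, 2), (0, 3), (2, 4)] : List (Fin 5 × Fin 5))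

/-- The dart: triangle 0,1,2; vertex 4 adjacent exactly to 0 and 2;
vertex 3 adjacent exactly to 0. -/
def GraphDart : SimpleGraph (Fin 5) :=
  SimpleGraph.fromRel fun a b =>
    (a, b) ∈ ([(0, 1), (0, 2), (1, 2), (0, 4), (2, 4), (0, 3)] : List (Fin 5 × Fin 5))

/-- The fox: adjacent vertices 0,1 and pairwise nonadjacent 2,3,4, each
adjacent to both 0 and 1 (K5 minus a triangle). -/
def GraphFox : SimpleGraph (Fin 5) :=
  SimpleGraph.fromRel fun a b =>
    (a, b) ∈ ([(0, 1), (0, 2), (0, 3), (0, 4), (1, 2), (1, 3), (1, 4)] : List (Fin 5 × Fin 5))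

/-- The gem: induced path 0-1-2-3 plus vertex 4 adjacent to all of them. -/
def GraphGem : SimpleGraph (Fin 5) :=
  SimpleGraph.fromRel fun a b =>
    (a, b) ∈ ([(0, 1), (1, 2), (2, 3), (0, 4), (1, 4), (2, 4), (3, 4)] : List (Fin 5 × Fin 5))

/-- `G` has no induced subgraph isomorphic to a member of
F = {C4, bull, dart, fox, gem}. -/
def FFree {V : Type*} (G : SimpleGraph V) : Prop :=
  ¬ HasInducedCopy GraphC4 G ∧ ¬ HasInducedCopy GraphBull G ∧
  ¬ HasInducedCopy GraphDart G ∧ ¬ HasInducedCopy GraphFox G ∧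
  ¬ HasInducedCopy GraphGem G

/-- `X` is an association set of `G`: the graph `G - X` has no induced `P₃`,
i.e., every component of `G - X` is a clique. -/
def IsAssociationSet {V : Type*} (G : SimpleGraph V) (X : Set V) : Prop :=
  ∀ a b c : V, a ∉ X → b ∉ X → c ∉ X →
    G.Adj a b → G.Adj b c → a ≠ c → G.Adj a c

/-- `X` is a dissociation set of `G`: the graph `G - X` has no `P₃` subgraph,
i.e., every component of `G - X` has at most two vertices. -/
def IsDissociationSet {V : Type*} (G : SimpleGraph V) (X : Set V) : Prop :=
  ∀ a b c : V, a ∉ X → b ∉ X → c ∉ X → G.Adj a b → G.Adj b c → a = c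

/-- Minimum cardinality of an association set of `G`. -/
noncomputable def optAsso {V : Type*} (G : SimpleGraph V) : ℕ :=
  sInf {n : ℕ | ∃ X : Set V, IsAssociationSet G X ∧ X.ncard = n}

/-- Minimum cardinality of a dissociation set of `G`. -/
noncomputable def optDiss {V : Type*} (G : SimpleGraph V) : ℕ :=
  sInf {n : ℕ | ∃ X : Set V, IsDissociationSet G X ∧ X.ncard = n}

/-! Let `Y` be a minimum association set of `G`. Restricting `Y` to `X` and to `Xᶜ` gives
association sets of `G[X]` and of `G - X`. Every graph of F still contains an induced `P₃` after
deleting any single vertex, so `G[X]` needs at least two deletions, and hence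
`|Y| = |Y ∩ X| + |Y ∩ Xᶜ| ≥ 2 + opt_asso (G - X)`. -/

section AssociationSet

variable {V W : Type*} {G : SimpleGraph V} {H : SimpleGraph W}

theorem IsAssociationSet.mono {S T : Set V} (hST : S ⊆ T) (hS : IsAssociationSet G S) :
    IsAssociationSet G T :=
  fun a b c ha hb hc => hS a b c (fun h => ha (hST h)) (fun h => hb (hST h)) (fun h => hc (hST h))

theorem IsAssociationSet.comap {Y : Set V} (hY : IsAssociationSet G Y) (f : H ↪g G) :
    IsAssociationSet H (f ⁻¹' Y) := by
  intro a b c ha hb hc hab hbc hac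
  exact f.map_adj_iff.mp <|
    hY _ _ _ ha hb hc (f.map_adj_iff.mpr hab) (f.map_adj_iff.mpr hbc) (f.injective.ne hac)

theorem isAssociationSet_univ (G : SimpleGraph V) : IsAssociationSet G Set.univ :=
  fun a _ _ ha => absurd (Set.mem_univ a) ha

theorem exists_isAssociationSet_ncard_eq_optAsso (G : SimpleGraph V) :
    ∃ Y, IsAssociationSet G Y ∧ Y.ncard = optAsso G :=
  Nat.sInf_mem (s := {n | ∃ Y, IsAssociationSet G Y ∧ Y.ncard = n})
    ⟨Set.univ.ncard, Set.univ, isAssociationSet_univ G, rfl⟩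

theorem optAsso_le_ncard {Y : Set V} (hY : IsAssociationSet G Y) : optAsso G ≤ Y.ncard :=
  Nat.sInf_le ⟨Y, hY, rfl⟩

theorem optAsso_induce_le_ncard_inter {Y : Set V} (hY : IsAssociationSet G Y) (A : Set V) :
    optAsso (G.induce A) ≤ (Y ∩ A).ncard := by
  have hcard : (((↑) : A → V) ⁻¹' Y).ncard = (Y ∩ A).ncard := by
    rw [← Set.ncard_image_of_injective _ Subtype.val_injective,
      Set.image_preimage_eq_inter_range, Subtype.range_coe]
  exact hcard ▸ optAsso_le_ncard (hY.comap (Embedding.induce A))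

theorem optAsso_le_of_embedding [Finite V] (f : H ↪g G) : optAsso H ≤ optAsso G := by
  obtain ⟨Y, hY, hcard⟩ := exists_isAssociationSet_ncard_eq_optAsso G
  calc optAsso H ≤ (f ⁻¹' Y).ncard := optAsso_le_ncard (hY.comap f)
    _ = (f '' (f ⁻¹' Y)).ncard := (Set.ncard_image_of_injective _ f.injective).symm
    _ ≤ Y.ncard := Set.ncard_le_ncard (Set.image_preimage_subset f Y)
    _ = optAsso G := hcard

theorem two_le_optAsso_of_forall_not_isAssociationSet_singleton [Finite W] [Nonempty W]
    (hH : ∀ w, ¬ IsAssociationSet H {w}) : 2 ≤ optAsso H := by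
  obtain ⟨S, hS, hcard⟩ := exists_isAssociationSet_ncard_eq_optAsso H
  by_contra! hlt
  obtain ⟨w, hSw⟩ : ∃ w, S ⊆ {w} := by
    rcases S.eq_empty_or_nonempty with rfl | ⟨x, hx⟩
    · exact ⟨Classical.arbitrary W, Set.empty_subset _⟩
    · exact ⟨x, fun y hy => (Set.ncard_le_one S.toFinite).mp (by omega) y hy x hx⟩
  exact hH w (hS.mono hSw)

end AssociationSet

-- The `Decidable` instance for the unfolded quantifier prefix over `Fin 5` exceeds the default size.
set_option synthInstance.maxSize 10000

theorem two_le_optAsso_graphC4 : 2 ≤ optAsso GraphC4 :=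
  two_le_optAsso_of_forall_not_isAssociationSet_singleton <| by
    simp only [IsAssociationSet, Set.mem_singleton_iff, GraphC4, fromRel_adj]; decide

theorem two_le_optAsso_graphBull : 2 ≤ optAsso GraphBull :=
  two_le_optAsso_of_forall_not_isAssociationSet_singleton <| by
    simp only [IsAssociationSet, Set.mem_singleton_iff, GraphBull, fromRel_adj]; decide

theorem two_le_optAsso_graphDart : 2 ≤ optAsso GraphDart :=
  two_le_optAsso_of_forall_not_isAssociationSet_singleton <| by
    simp only [IsAssociationSet, Set.mem_singleton_iff, GraphDart, fromRel_adj]; decide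

theorem two_le_optAsso_graphFox : 2 ≤ optAsso GraphFox :=
  two_le_optAsso_of_forall_not_isAssociationSet_singleton <| by
    simp only [IsAssociationSet, Set.mem_singleton_iff, GraphFox, fromRel_adj]; decide

theorem two_le_optAsso_graphGem : 2 ≤ optAsso GraphGem :=
  two_le_optAsso_of_forall_not_isAssociationSet_singleton <| by
    simp only [IsAssociationSet, Set.mem_singleton_iff, GraphGem, fromRel_adj]; decide

/-- If `G[X]` is isomorphic to a member of F, then
`opt_asso (G - X) ≤ opt_asso G - 2`. -/
theorem stmt_1 {V : Type*} [Fintype V] (G : SimpleGraph V) (X : Set V)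
    (hX : Nonempty (G.induce X ≃g GraphC4) ∨ Nonempty (G.induce X ≃g GraphBull) ∨
      Nonempty (G.induce X ≃g GraphDart) ∨ Nonempty (G.induce X ≃g GraphFox) ∨
      Nonempty (G.induce X ≃g GraphGem)) :
    optAsso (G.induce Xᶜ) + 2 ≤ optAsso G := by
  have hX2 : 2 ≤ optAsso (G.induce X) := by
    rcases hX with ⟨⟨e⟩⟩ | ⟨⟨e⟩⟩ | ⟨⟨e⟩⟩ | ⟨⟨e⟩⟩ | ⟨⟨e⟩⟩
    · exact two_le_optAsso_graphC4.trans (optAsso_le_of_embedding e.symm.toEmbedding)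
    · exact two_le_optAsso_graphBull.trans (optAsso_le_of_embedding e.symm.toEmbedding)
    · exact two_le_optAsso_graphDart.trans (optAsso_le_of_embedding e.symm.toEmbedding)
    · exact two_le_optAsso_graphFox.trans (optAsso_le_of_embedding e.symm.toEmbedding)
    · exact two_le_optAsso_graphGem.trans (optAsso_le_of_embedding e.symm.toEmbedding)
  obtain ⟨Y, hY, hcard⟩ := exists_isAssociationSet_ncard_eq_optAsso G
  have hsplit : (Y ∩ X).ncard + (Y \ X).ncard = Y.ncard :=
    Set.ncard_inter_add_ncard_sdiff_eq_ncard Y X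
  have hin := optAsso_induce_le_ncard_inter hY X
  have hout := optAsso_induce_le_ncard_inter hY Xᶜ
  rw [← Set.sdiff_eq] at hout
  omega
end

section
/- Let G be a connected F-free finite simple graph that is not a clique, and suppose V(G) admits no partition into three sets U, C1, C2 such that every vertex of U is adjacent to all other vertices of G, C1 and C2 both induce cliques, and there is no edge between C1 and C2. Then the quotient graph Q̃(G) is triangle-free (contains no three pairwise adjacent vertices). -/
open SimpleGraph

/-!
Three pairwise adjacent maximal strong modules `M₁, M₂, M₃` are pairwise completely joined, so
representatives `xᵢ ∈ Mᵢ` form a triangle.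

If `G` and its complement are both connected, a maximal proper module containing `Mᵢ ∪ Mⱼ` is
strong, so `Mᵢ ∪ Mⱼ` is not a module and some vertex sees exactly one of `xᵢ, xⱼ`. Two such
vertices together with the triangle induce a `C4`, bull, dart or gem.

If the complement is disconnected, take a co-component `K` containing a non-edge. It is a strong
module, so it meets at most one `Mᵢ`, and two adjacent triangle vertices lie outside `K`. With
their help, excluding `C4`, dart, gem and fox forces the vertices outside `K` to be universal and
`K` to split into two cliques with no edge between them: the forbidden decomposition.
-/

section
variable {V : Type*} {G : SimpleGraph V}

theorem hasInducedCopy_of_adj_iff {n : ℕ} {H : SimpleGraph (Fin n)} (f : Fin n → V)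
    (hf : Function.Injective f) (hadj : ∀ i j, G.Adj (f i) (f j) ↔ H.Adj i j) :
    HasInducedCopy H G :=
  ⟨⟨f, hf⟩, hadj⟩

namespace FFree

theorem false_of_induced_c4 (hF : FFree G) {a b c d : V} (hab : G.Adj a b)
    (hbc : G.Adj b c) (hcd : G.Adj c d) (had : G.Adj a d) (hac : ¬ G.Adj a c)
    (hbd : ¬ G.Adj b d) (hac' : a ≠ c) (hbd' : b ≠ d) : False := by
  refine hF.1 (hasInducedCopy_of_adj_iff ![a, b, c, d] ?_ ?_)
  · intro i j hij
    fin_cases i <;> fin_cases j <;> simp_all [hab.ne, hbc.ne, hcd.ne, had.ne, eq_comm]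
  · intro i j
    fin_cases i <;> fin_cases j <;> simp [GraphC4, hab, hbc, hcd, had, hac, hbd, G.adj_comm]

theorem false_of_induced_bull (hF : FFree G) {a b c d e : V} (hab : G.Adj a b)
    (hac : G.Adj a c) (hbc : G.Adj b c) (had : G.Adj a d) (hce : G.Adj c e)
    (hae : ¬ G.Adj a e) (hbd : ¬ G.Adj b d) (hbe : ¬ G.Adj b e) (hcd : ¬ G.Adj c d)
    (hde : ¬ G.Adj d e) : False := by
  refine hF.2.1 (hasInducedCopy_of_adj_iff ![a, b, c, d, e] ?_ ?_)
  · intro i j hij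
    fin_cases i <;> fin_cases j <;>
      simp_all [hab.ne, hac.ne, hbc.ne, had.ne, hce.ne, eq_comm, G.adj_comm]
  · intro i j
    fin_cases i <;> fin_cases j <;>
      simp [GraphBull, hab, hac, hbc, had, hce, hae, hbd, hbe, hcd, hde, G.adj_comm]

theorem false_of_induced_dart (hF : FFree G) {a b c d e : V} (hab : G.Adj a b)
    (hac : G.Adj a c) (hbc : G.Adj b c) (hae : G.Adj a e) (hce : G.Adj c e) (had : G.Adj a d)
    (hbd : ¬ G.Adj b d) (hbe : ¬ G.Adj b e) (hcd : ¬ G.Adj c d) (hde : ¬ G.Adj d e)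
    (hbe' : b ≠ e) : False := by
  refine hF.2.2.1 (hasInducedCopy_of_adj_iff ![a, b, c, d, e] ?_ ?_)
  · intro i j hij
    fin_cases i <;> fin_cases j <;>
      simp_all [hab.ne, hac.ne, hbc.ne, hae.ne, hce.ne, had.ne, eq_comm, G.adj_comm]
  · intro i j
    fin_cases i <;> fin_cases j <;>
      simp [GraphDart, hab, hac, hbc, hae, hce, had, hbd, hbe, hcd, hde, G.adj_comm]

theorem false_of_induced_fox (hF : FFree G) {a b c d e : V} (hab : G.Adj a b)
    (hac : G.Adj a c) (had : G.Adj a d) (hae : G.Adj a e) (hbc : G.Adj b c) (hbd : G.Adj b d)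
    (hbe : G.Adj b e) (hcd : ¬ G.Adj c d) (hce : ¬ G.Adj c e) (hde : ¬ G.Adj d e)
    (hcd' : c ≠ d) (hce' : c ≠ e) (hde' : d ≠ e) : False := by
  refine hF.2.2.2.1 (hasInducedCopy_of_adj_iff ![a, b, c, d, e] ?_ ?_)
  · intro i j hij
    fin_cases i <;> fin_cases j <;>
      simp_all [hab.ne, hac.ne, had.ne, hae.ne, hbc.ne, hbd.ne, hbe.ne, eq_comm]
  · intro i j
    fin_cases i <;> fin_cases j <;>
      simp [GraphFox, hab, hac, had, hae, hbc, hbd, hbe, hcd, hce, hde, G.adj_comm]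

theorem false_of_induced_gem (hF : FFree G) {a b c d e : V} (hab : G.Adj a b)
    (hbc : G.Adj b c) (hcd : G.Adj c d) (hae : G.Adj a e) (hbe : G.Adj b e) (hce : G.Adj c e)
    (hde : G.Adj d e) (hac : ¬ G.Adj a c) (had : ¬ G.Adj a d) (hbd : ¬ G.Adj b d) : False := by
  refine hF.2.2.2.2 (hasInducedCopy_of_adj_iff ![a, b, c, d, e] ?_ ?_)
  · intro i j hij
    fin_cases i <;> fin_cases j <;>
      simp_all [hab.ne, hbc.ne, hcd.ne, hae.ne, hbe.ne, hce.ne, hde.ne, eq_comm, G.adj_comm]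
  · intro i j
    fin_cases i <;> fin_cases j <;>
      simp [GraphGem, hab, hbc, hcd, hae, hbe, hce, hde, hac, had, hbd, G.adj_comm]

theorem false_of_isolating_pair (hF : FFree G) {x y z u v : V} (hxy : G.Adj x y)
    (hxz : G.Adj x z) (hyz : G.Adj y z) (hux : u ≠ x) (hvy : v ≠ y)
    (hu : ¬ (G.Adj u x ↔ G.Adj u y)) (hu' : G.Adj u y ↔ G.Adj u z)
    (hv : ¬ (G.Adj v y ↔ G.Adj v x)) (hv' : G.Adj v x ↔ G.Adj v z) : False := by
  have huy : u ≠ y := by rintro rfl; exact G.irrefl (hu'.2 hyz)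
  have huz : u ≠ z := by rintro rfl; exact G.irrefl (hu'.1 hyz.symm)
  have hvx : v ≠ x := by rintro rfl; exact G.irrefl (hv'.2 hxz)
  have hvz : v ≠ z := by rintro rfl; exact G.irrefl (hv'.1 hxz.symm)
  have huv : u ≠ v := by rintro rfl; exact hu (hv'.trans hu'.symm)
  -- `u` sees only `x` or all of the triangle but `x`, and `v` likewise for `y`
  by_cases hux' : G.Adj u x <;> by_cases hvy' : G.Adj v y <;> by_cases huv' : G.Adj u v
  · apply hF.false_of_induced_c4 (a := u) (b := x) (c := y) (d := v) <;>
      simp_all [G.adj_comm, eq_comm]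
  · apply hF.false_of_induced_bull (a := x) (b := z) (c := y) (d := u) (e := v) <;>
      simp_all [G.adj_comm, eq_comm]
  · apply hF.false_of_induced_gem (a := u) (b := v) (c := z) (d := y) (e := x) <;>
      simp_all [G.adj_comm, eq_comm]
  · apply hF.false_of_induced_dart (a := x) (b := y) (c := z) (d := u) (e := v) <;>
      simp_all [G.adj_comm, eq_comm]
  · apply hF.false_of_induced_gem (a := v) (b := u) (c := z) (d := x) (e := y) <;>
      simp_all [G.adj_comm, eq_comm]
  · apply hF.false_of_induced_dart (a := y) (b := x) (c := z) (d := v) (e := u) <;>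
      simp_all [G.adj_comm, eq_comm]
  · apply hF.false_of_induced_c4 (a := u) (b := y) (c := x) (d := v) <;>
      simp_all [G.adj_comm, eq_comm]
  · apply hF.false_of_induced_gem (a := u) (b := y) (c := x) (d := v) (e := z) <;>
      simp_all [G.adj_comm, eq_comm]

theorem false_of_separated_triangle (hF : FFree G) {x y z : V} (hxy : G.Adj x y)
    (hxz : G.Adj x z) (hyz : G.Adj y z)
    (hsxy : ∃ u, u ≠ x ∧ u ≠ y ∧ ¬ (G.Adj u x ↔ G.Adj u y))
    (hsxz : ∃ u, u ≠ x ∧ u ≠ z ∧ ¬ (G.Adj u x ↔ G.Adj u z))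
    (hsyz : ∃ u, u ≠ y ∧ u ≠ z ∧ ¬ (G.Adj u y ↔ G.Adj u z)) : False := by
  obtain ⟨u, hux, huy, hu⟩ := hsxy
  by_cases hu' : G.Adj u y ↔ G.Adj u z
  · obtain ⟨v, hvy, hvz, hv⟩ := hsyz
    by_cases hv' : G.Adj v x ↔ G.Adj v z
    · exact hF.false_of_isolating_pair hxy hxz hyz hux hvy hu hu' (by tauto) hv'
    · exact hF.false_of_isolating_pair hxz hxy hyz.symm hux hvz (by tauto) (by tauto)
        (by tauto) (by tauto)
  · obtain ⟨v, hvx, hvz, hv⟩ := hsxz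
    by_cases hv' : G.Adj v y ↔ G.Adj v z
    · exact hF.false_of_isolating_pair hxy.symm hyz hxz huy hvx (by tauto) (by tauto)
        (by tauto) hv'
    · exact hF.false_of_isolating_pair hyz hxy.symm hxz.symm huy hvz (by tauto) (by tauto)
        (by tauto) (by tauto)

end FFree

namespace IsModule

variable {M A B : Set V}

theorem adj_iff (hM : IsModule G M) {x a b : V} (hx : x ∉ M) (ha : a ∈ M) (hb : b ∈ M) :
    G.Adj x a ↔ G.Adj x b := by
  rcases hM x hx with h | h
  · exact iff_of_true (h a ha) (h b hb)
  · exact iff_of_false (h a ha) (h b hb)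

theorem of_forall_adj_iff (c : V) (h : ∀ x ∉ M, ∀ a ∈ M, G.Adj x a ↔ G.Adj x c) :
    IsModule G M := by
  intro x hx
  by_cases hc : G.Adj x c
  · exact .inl fun a ha => (h x hx a ha).2 hc
  · exact .inr fun a ha => mt (h x hx a ha).1 hc

theorem union (hA : IsModule G A) (hB : IsModule G B) (hAB : (A ∩ B).Nonempty) :
    IsModule G (A ∪ B) := by
  obtain ⟨m, hmA, hmB⟩ := hAB
  refine of_forall_adj_iff m fun x hx a ha => ?_
  rcases ha with ha | ha
  · exact hA.adj_iff (fun h => hx (.inl h)) ha hmA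
  · exact hB.adj_iff (fun h => hx (.inr h)) ha hmB

end IsModule

theorem SimpleGraph.Reachable.exists_adj_boundary {H : SimpleGraph V} {x y : V}
    (h : H.Reachable x y) {S : Set V} (hx : x ∈ S) (hy : y ∉ S) :
    ∃ p ∈ S, ∃ q ∉ S, H.Adj p q := by
  obtain ⟨w⟩ := h
  obtain ⟨d, -, hd₁, hd₂⟩ := w.exists_boundary_dart S hx hy
  exact ⟨_, hd₁, _, hd₂, d.adj⟩

/-- Two proper modules covering `V` would make one of them, minus the other, completely
joined or completely unjoined to the rest. -/
theorem IsModule.union_ne_univ (hconn : G.Connected) (hpre : Gᶜ.Preconnected) {A B : Set V}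
    (hA : IsModule G A) (hB : IsModule G B) (hA' : A ≠ Set.univ) (hB' : B ≠ Set.univ) :
    A ∪ B ≠ Set.univ := by
  intro hU
  obtain ⟨b, hbA⟩ := (Set.ne_univ_iff_exists_notMem A).1 hA'
  obtain ⟨a, haB⟩ := (Set.ne_univ_iff_exists_notMem B).1 hB'
  have hmem : ∀ z, z ∈ A ∪ B := fun z => hU ▸ Set.mem_univ z
  have hcross : ∀ p ∈ A \ B, ∀ q ∉ A \ B, G.Adj p q ↔ G.Adj a b := by
    intro p hp q hq
    have hqB : q ∈ B := by_contra fun h => hq ⟨(hmem q).resolve_right h, h⟩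
    calc G.Adj p q ↔ G.Adj p b := hB.adj_iff hp.2 hqB ((hmem b).resolve_left hbA)
      _ ↔ G.Adj b p := G.adj_comm _ _
      _ ↔ G.Adj b a := hA.adj_iff hbA hp.1 ((hmem a).resolve_right haB)
      _ ↔ G.Adj a b := G.adj_comm _ _
  have ha : a ∈ A \ B := ⟨(hmem a).resolve_right haB, haB⟩
  have hb : b ∉ A \ B := fun h => hbA h.1
  by_cases hab : G.Adj a b
  · obtain ⟨p, hp, q, hq, hpq⟩ := (hpre a b).exists_adj_boundary ha hb
    exact ((compl_adj G p q).1 hpq).2 ((hcross p hp q hq).2 hab)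
  · obtain ⟨p, hp, q, hq, hpq⟩ := (hconn.preconnected a b).exists_adj_boundary ha hb
    exact hab ((hcross p hp q hq).1 hpq)

theorem exists_isStrongModule_superset [Finite V] (hconn : G.Connected)
    (hpre : Gᶜ.Preconnected) {S : Set V} (hS : IsModule G S) (hS' : S ≠ Set.univ) :
    ∃ A, IsStrongModule G A ∧ S ⊆ A ∧ A ≠ Set.univ := by
  obtain ⟨A, ⟨hA, hSA, hA'⟩, hmax⟩ :=
    (Set.toFinite {A : Set V | IsModule G A ∧ S ⊆ A ∧ A ≠ Set.univ}).exists_maximal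
      ⟨S, hS, subset_rfl, hS'⟩
  refine ⟨A, ⟨hA, fun B hB hAB => ?_⟩, hSA, hA'⟩
  by_cases hB' : B = Set.univ
  · exact .inl (hB' ▸ Set.subset_univ A)
  · refine .inr (Set.subset_union_right.trans (hmax ?_ Set.subset_union_left))
    exact ⟨hA.union hB hAB, hSA.trans Set.subset_union_left,
      hA.union_ne_univ hconn hpre hB hA' hB'⟩

namespace IsMaximalStrongModule

variable {M : Set V}

theorem exists_separating [Finite V] (hconn : G.Connected) (hpre : Gᶜ.Preconnected)
    (hM : IsMaximalStrongModule G M) {N : Set V} (hN : IsModule G N) {x y : V} (hx : x ∈ M)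
    (hy : y ∈ N) (hyM : y ∉ M) (hMN : M ∪ N ≠ Set.univ) :
    ∃ u, u ≠ x ∧ u ≠ y ∧ ¬ (G.Adj u x ↔ G.Adj u y) := by
  by_contra! h
  have hunion : IsModule G (M ∪ N) := IsModule.of_forall_adj_iff x fun z hz a ha => by
    have hzM : z ∉ M := fun h => hz (.inl h)
    have hzN : z ∉ N := fun h => hz (.inr h)
    rcases ha with ha | ha
    · exact hM.1.1.adj_iff hzM ha hx
    · exact (hN.adj_iff hzN ha hy).trans
        (h z (ne_of_mem_of_not_mem hx hzM).symm (ne_of_mem_of_not_mem hy hzN).symm).symm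
  obtain ⟨A, hA, hMNA, hA'⟩ := exists_isStrongModule_superset hconn hpre hunion hMN
  have hMA : M ⊆ A := Set.subset_union_left.trans hMNA
  exact hA' (hM.2.2.2 A hA ((Set.ssubset_iff_of_subset hMA).2 ⟨y, hMNA (.inr hy), hyM⟩))

theorem subset_of_inter_nonempty (hM : IsMaximalStrongModule G M) {S : Set V}
    (hS : IsStrongModule G S) (hS' : S ≠ Set.univ) (hMS : (M ∩ S).Nonempty) : S ⊆ M := by
  rcases hM.1.2 S hS.1 hMS with hMS | hSM
  · rcases hMS.eq_or_ssubset with rfl | hlt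
    · exact subset_rfl
    · exact absurd (hM.2.2.2 S hS hlt) hS'
  · exact hSM

end IsMaximalStrongModule

theorem FFree.false_of_complete_triple [Finite V] (hF : FFree G) (hconn : G.Connected)
    (hpre : Gᶜ.Preconnected) {M₁ M₂ M₃ : Set V} (h₁ : IsMaximalStrongModule G M₁)
    (h₂ : IsMaximalStrongModule G M₂) (h₃ : IsMaximalStrongModule G M₃)
    (h₁₂ : ∀ a ∈ M₁, ∀ b ∈ M₂, G.Adj a b) (h₁₃ : ∀ a ∈ M₁, ∀ b ∈ M₃, G.Adj a b)
    (h₂₃ : ∀ a ∈ M₂, ∀ b ∈ M₃, G.Adj a b) : False := by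
  have hsep : ∀ {M N : Set V} {x y z : V}, IsMaximalStrongModule G M → IsModule G N →
      x ∈ M → y ∈ N → (∀ a ∈ M, ∀ b ∈ N, G.Adj a b) → (∀ a ∈ M, G.Adj a z) →
      (∀ b ∈ N, G.Adj b z) → ∃ u, u ≠ x ∧ u ≠ y ∧ ¬ (G.Adj u x ↔ G.Adj u y) := by
    intro M N x y z hM hN hx hy hMN hMz hNz
    refine hM.exists_separating hconn hpre hN hx hy (fun h => G.irrefl (hMN y h y hy)) ?_
    intro hU
    rcases (hU ▸ Set.mem_univ z : z ∈ M ∪ N) with h | h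
    · exact G.irrefl (hMz z h)
    · exact G.irrefl (hNz z h)
  obtain ⟨x₁, hx₁⟩ := h₁.2.1
  obtain ⟨x₂, hx₂⟩ := h₂.2.1
  obtain ⟨x₃, hx₃⟩ := h₃.2.1
  exact hF.false_of_separated_triangle (h₁₂ x₁ hx₁ x₂ hx₂) (h₁₃ x₁ hx₁ x₃ hx₃)
    (h₂₃ x₂ hx₂ x₃ hx₃)
    (hsep h₁ h₂.1.1 hx₁ hx₂ h₁₂ (fun a ha => h₁₃ a ha x₃ hx₃) (fun b hb => h₂₃ b hb x₃ hx₃))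
    (hsep h₁ h₃.1.1 hx₁ hx₃ h₁₃ (fun a ha => h₁₂ a ha x₂ hx₂)
      (fun b hb => (h₂₃ x₂ hx₂ b hb).symm))
    (hsep h₂ h₃.1.1 hx₂ hx₃ h₂₃ (fun a ha => (h₁₂ x₁ hx₁ a ha).symm)
      (fun b hb => (h₁₃ x₁ hx₁ b hb).symm))

namespace SimpleGraph.ConnectedComponent

variable {C : Gᶜ.ConnectedComponent}

theorem adj_of_notMem_supp {x a : V} (hx : x ∉ C.supp) (ha : a ∈ C.supp) : G.Adj x a := by
  by_contra h
  exact hx (C.mem_supp_of_adj_mem_supp ha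
    ((compl_adj G a x).2 ⟨ne_of_mem_of_not_mem ha hx, fun h' => h h'.symm⟩))

theorem exists_not_adj_of_mem_supp {b c : V} (hb : b ∈ C.supp) (hc : c ∈ C.supp)
    (hbc : b ≠ c) : ∃ y ≠ b, ¬ G.Adj b y := by
  obtain ⟨p, rfl, q, hq, hpq⟩ :=
    (C.reachable_of_mem_supp hb hc).exists_adj_boundary (S := {b}) rfl hbc.symm
  exact ⟨q, hq, ((compl_adj G _ _).1 hpq).2⟩

theorem isStrongModule_supp (C : Gᶜ.ConnectedComponent) : IsStrongModule G C.supp := by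
  refine ⟨fun x hx => .inl fun a ha => adj_of_notMem_supp hx ha, fun M hM hCM => ?_⟩
  by_cases hMC : M ⊆ C.supp
  · exact .inr hMC
  obtain ⟨a, haC, haM⟩ := hCM
  obtain ⟨b, hbM, hbC⟩ := Set.not_subset.1 hMC
  refine .inl fun c hc => by_contra fun hcM => ?_
  obtain ⟨p, hp, q, hq, hpq⟩ :=
    (C.reachable_of_mem_supp haC hc).exists_adj_boundary (S := C.supp ∩ M) ⟨haC, haM⟩
      fun h => hcM h.2
  have hqC : q ∈ C.supp := C.mem_supp_of_adj_mem_supp hp.1 hpq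
  have hqM : q ∉ M := fun h => hq ⟨hqC, h⟩
  -- `q` misses `p ∈ M`, hence all of `M`, but it sees `b ∉ C.supp`
  exact ((compl_adj G p q).1 hpq).2
    ((hM.adj_iff hqM hp.2 hbM).2 (adj_of_notMem_supp hbC hqC).symm).symm

end SimpleGraph.ConnectedComponent

def HasUniversalTwoCliquePartition (G : SimpleGraph V) : Prop :=
  ∃ U C1 C2 : Set V,
    Disjoint U C1 ∧ Disjoint U C2 ∧ Disjoint C1 C2 ∧ U ∪ C1 ∪ C2 = Set.univ ∧
    (∀ u ∈ U, ∀ v : V, v ≠ u → G.Adj u v) ∧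
    G.IsClique C1 ∧ G.IsClique C2 ∧ (∀ a ∈ C1, ∀ b ∈ C2, ¬ G.Adj a b)

namespace FFree

variable {K : Set V}

theorem adj_of_notMem (hF : FFree G) (hK : ∀ x ∉ K, ∀ a ∈ K, G.Adj x a) {u u' : V}
    (hu : u ∈ K) (hu' : u' ∈ K) (huu' : u ≠ u') (hnadj : ¬ G.Adj u u') {w w' : V}
    (hw : w ∉ K) (hw' : w' ∉ K) (hww' : w ≠ w') : G.Adj w w' :=
  by_contra fun h => hF.false_of_induced_c4 (hK w hw u hu) (hK w' hw' u hu).symm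
    (hK w' hw' u' hu') (hK w hw u' hu') h hnadj hww' huu'

theorem adj_of_adj_of_adj (hF : FFree G) (hK : ∀ x ∉ K, ∀ a ∈ K, G.Adj x a)
    (hKuniv : ∀ b ∈ K, ∃ y ≠ b, ¬ G.Adj b y) {w : V} (hw : w ∉ K) {a b c : V} (ha : a ∈ K)
    (hb : b ∈ K) (hc : c ∈ K) (hab : G.Adj a b) (hbc : G.Adj b c) (hac : a ≠ c) :
    G.Adj a c := by
  by_contra hac'
  obtain ⟨d, hdb, hbd⟩ := hKuniv b hb
  have hd : d ∈ K := by_contra fun hd => hbd (hK d hd b hb).symm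
  have hwa := hK w hw a ha; have hwb := hK w hw b hb
  have hwc := hK w hw c hc; have hwd := hK w hw d hd
  by_cases hda : G.Adj d a <;> by_cases hdc : G.Adj d c
  · apply hF.false_of_induced_c4 (a := a) (b := d) (c := c) (d := b) <;>
      simp_all [G.adj_comm, eq_comm]
  · apply hF.false_of_induced_gem (a := d) (b := a) (c := b) (d := c) (e := w) <;>
      simp_all [G.adj_comm, eq_comm]
  · apply hF.false_of_induced_gem (a := d) (b := c) (c := b) (d := a) (e := w) <;>
      simp_all [G.adj_comm, eq_comm]
  · apply hF.false_of_induced_dart (a := w) (b := a) (c := b) (d := d) (e := c) <;>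
      simp_all [G.adj_comm, eq_comm]

theorem adj_of_not_adj_of_not_adj (hF : FFree G) (hK : ∀ x ∉ K, ∀ a ∈ K, G.Adj x a)
    {w w' : V} (hw : w ∉ K) (hw' : w' ∉ K) (hww' : G.Adj w w') {u z z' : V} (hu : u ∈ K)
    (hz : z ∈ K) (hz' : z' ∈ K) (huz : u ≠ z) (huz' : u ≠ z') (hzz' : z ≠ z')
    (hnz : ¬ G.Adj u z) (hnz' : ¬ G.Adj u z') : G.Adj z z' :=
  by_contra fun h => hF.false_of_induced_fox hww' (hK w hw u hu) (hK w hw z hz)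
    (hK w hw z' hz') (hK w' hw' u hu) (hK w' hw' z hz) (hK w' hw' z' hz') hnz hnz' h huz huz'
    hzz'

theorem hasUniversalTwoCliquePartition (hF : FFree G) (hK : ∀ x ∉ K, ∀ a ∈ K, G.Adj x a)
    (hKuniv : ∀ b ∈ K, ∃ y ≠ b, ¬ G.Adj b y) {u u' : V} (hu : u ∈ K) (hu' : u' ∈ K)
    (huu' : u ≠ u') (hnadj : ¬ G.Adj u u') {w w' : V} (hw : w ∉ K) (hw' : w' ∉ K)
    (hww' : w ≠ w') : HasUniversalTwoCliquePartition G := by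
  have hout : ∀ {x y : V}, x ∉ K → y ∉ K → x ≠ y → G.Adj x y :=
    hF.adj_of_notMem hK hu hu' huu' hnadj
  have hp3 : ∀ {a b c : V}, a ∈ K → b ∈ K → c ∈ K → G.Adj a b → G.Adj b c → a ≠ c →
      G.Adj a c :=
    hF.adj_of_adj_of_adj hK hKuniv hw
  set N := insert u (G.neighborSet u)
  refine ⟨Kᶜ, K ∩ N, K \ N, disjoint_compl_left.mono_right Set.inter_subset_left,
    disjoint_compl_left.mono_right Set.sdiff_subset,
    Set.disjoint_sdiff_right.mono_left Set.inter_subset_right, ?_, ?_, ?_, ?_, ?_⟩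
  · ext z
    simp only [Set.mem_union, Set.mem_compl_iff, Set.mem_inter_iff, Set.mem_sdiff,
      Set.mem_univ, iff_true]
    tauto
  · intro x hx y hyx
    by_cases hy : y ∈ K
    · exact hK x hx y hy
    · exact hout hx hy hyx.symm
  · rintro a ⟨ha, rfl | hua⟩ b ⟨hb, rfl | hub⟩ hab
    · exact absurd rfl hab
    · exact hub
    · exact hua.symm
    · exact hp3 ha hu hb hua.symm hub hab
  · rintro z ⟨hz, hzN⟩ z' ⟨hz', hz'N⟩ hzz'
    simp only [N, Set.mem_insert_iff, mem_neighborSet, not_or] at hzN hz'N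
    exact hF.adj_of_not_adj_of_not_adj hK hw hw' (hout hw hw' hww') hu hz hz'
      (Ne.symm hzN.1) (Ne.symm hz'N.1) hzz' hzN.2 hz'N.2
  · rintro a ⟨ha, rfl | hua⟩ b ⟨hb, hbN⟩ hab
    · exact hbN (.inr hab)
    · exact hbN (.inr (hp3 hu ha hb hua hab fun h => hbN (.inl h.symm)))

end FFree

theorem FFree.hasUniversalTwoCliquePartition_of_not_preconnected_compl (hF : FFree G)
    (hnc : ¬ G.IsClique Set.univ) (hpre : ¬ Gᶜ.Preconnected) {M₁ M₂ M₃ : Set V}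
    (h₁ : IsMaximalStrongModule G M₁) (h₂ : IsMaximalStrongModule G M₂)
    (h₃ : IsMaximalStrongModule G M₃) (h₁₂ : ∀ a ∈ M₁, ∀ b ∈ M₂, G.Adj a b)
    (h₁₃ : ∀ a ∈ M₁, ∀ b ∈ M₃, G.Adj a b) (h₂₃ : ∀ a ∈ M₂, ∀ b ∈ M₃, G.Adj a b) :
    HasUniversalTwoCliquePartition G := by
  obtain ⟨u, u', huu', hnadj⟩ : ∃ u u', u ≠ u' ∧ ¬ G.Adj u u' := by
    simpa [SimpleGraph.IsClique, Set.Pairwise] using hnc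
  set C := Gᶜ.connectedComponentMk u
  have hu : u ∈ C.supp := rfl
  have hu' : u' ∈ C.supp := C.mem_supp_of_adj_mem_supp hu ((compl_adj G u u').2 ⟨huu', hnadj⟩)
  have hCne : C.supp ≠ Set.univ := fun h =>
    hpre fun x y => C.reachable_of_mem_supp (h ▸ Set.mem_univ x) (h ▸ Set.mem_univ y)
  -- otherwise both modules would contain the strong module `C.supp`
  have hout : ∀ {M N : Set V}, IsMaximalStrongModule G M → IsMaximalStrongModule G N →
      (∀ a ∈ M, ∀ b ∈ N, G.Adj a b) → ∀ {x y : V}, x ∈ M → y ∈ N → x ∈ C.supp → y ∉ C.supp :=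
    fun hM hN hMN x y hx hy hxC hyC => G.irrefl <| hMN u
      (hM.subset_of_inter_nonempty C.isStrongModule_supp hCne ⟨x, hx, hxC⟩ hu) u
      (hN.subset_of_inter_nonempty C.isStrongModule_supp hCne ⟨y, hy, hyC⟩ hu)
  have hCnouniv : ∀ b ∈ C.supp, ∃ y ≠ b, ¬ G.Adj b y := by
    intro b hb
    by_cases hbu : b = u
    · exact C.exists_not_adj_of_mem_supp hb hu' (hbu ▸ huu')
    · exact C.exists_not_adj_of_mem_supp hb hu hbu
  have hpart : ∀ {w w' : V}, w ∉ C.supp → w' ∉ C.supp → G.Adj w w' →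
      HasUniversalTwoCliquePartition G := fun hw hw' hww' =>
    hF.hasUniversalTwoCliquePartition (fun x hx a ha => C.adj_of_notMem_supp hx ha) hCnouniv
      hu hu' huu' hnadj hw hw' hww'.ne
  obtain ⟨x₁, hx₁⟩ := h₁.2.1
  obtain ⟨x₂, hx₂⟩ := h₂.2.1
  obtain ⟨x₃, hx₃⟩ := h₃.2.1
  by_cases hx₁C : x₁ ∈ C.supp
  · exact hpart (hout h₁ h₂ h₁₂ hx₁ hx₂ hx₁C) (hout h₁ h₃ h₁₃ hx₁ hx₃ hx₁C) (h₂₃ x₂ hx₂ x₃ hx₃)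
  by_cases hx₂C : x₂ ∈ C.supp
  · exact hpart hx₁C (hout h₂ h₃ h₂₃ hx₂ hx₃ hx₂C) (h₁₃ x₁ hx₁ x₃ hx₃)
  · exact hpart hx₁C hx₂C (h₁₂ x₁ hx₁ x₂ hx₂)

end

/-- For a connected F-free graph that is not a clique and does not
decompose into universal vertices plus two disjoint cliques, the quotient graph
Q̃(G) is triangle-free. -/
theorem stmt_2 {V : Type*} [Fintype V] (G : SimpleGraph V) (hconn : G.Connected)
    (hF : FFree G) (hnc : ¬ G.IsClique (Set.univ : Set V))
    (hnp : ¬ ∃ U C1 C2 : Set V,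
      Disjoint U C1 ∧ Disjoint U C2 ∧ Disjoint C1 C2 ∧ U ∪ C1 ∪ C2 = Set.univ ∧
      (∀ u ∈ U, ∀ v : V, v ≠ u → G.Adj u v) ∧
      G.IsClique C1 ∧ G.IsClique C2 ∧ (∀ a ∈ C1, ∀ b ∈ C2, ¬ G.Adj a b)) :
    (QuotientGraph G).CliqueFree 3 := by
  classical
  intro t ht
  obtain ⟨A, B, C, hAB, hAC, hBC, rfl⟩ := is3Clique_iff.1 ht
  by_cases hpre : Gᶜ.Preconnected
  · exact hF.false_of_complete_triple hconn hpre A.2 B.2 C.2 hAB.2 hAC.2 hBC.2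
  · exact hnp (hF.hasUniversalTwoCliquePartition_of_not_preconnected_compl hnc hpre A.2 B.2 C.2
      hAB.2 hAC.2 hBC.2)
end

section
/- Let G be a connected F-free finite simple graph that is not a clique, and suppose V(G) admits no partition into three sets U, C1, C2 such that every vertex of U is adjacent to all other vertices of G, C1 and C2 both induce cliques, and there is no edge between C1 and C2. Then every maximal strong module M of G whose induced subgraph G[M] is not a clique satisfies |N_G(M)| = 1, i.e., exactly one vertex of G outside M is adjacent to M. -/
open SimpleGraph

/-!
Let `b, d` be nonadjacent vertices of `M`. As `M` is a module, every vertex of `N = N_G(M)` is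
complete to `M`, so two nonadjacent vertices of `N` would span a `C4` with `b, d`: `N` is a clique.
If `N` had two vertices, a vertex outside `M ∪ N` adjacent to `N` would span a fox or a dart with
them and `b, d`; by connectivity `V = M ∪ N`, so the vertices of `N` are universal. Given a
universal vertex, excluding `C4`, gem and dart makes every non-universal vertex `p` the middle of
no induced `P₃`, and given two universal vertices, excluding the fox forbids three pairwise
nonadjacent vertices. So the closed neighbourhood of `p` among the non-universal vertices and its
complement there are two cliques with no edge between them, a partition the theorem excludes.
-/

section

variable {V : Type*} {G : SimpleGraph V}

lemma hasInducedCopy_of_injective {W : Type*} {H : SimpleGraph W} (f : W → V)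
    (hf : f.Injective) (hadj : ∀ a b, G.Adj (f a) (f b) ↔ H.Adj a b) : HasInducedCopy H G :=
  ⟨⟨f, hf⟩, hadj⟩

lemma hasInducedCopy_graphC4 {a b c d : V} (hab : G.Adj a b) (hbc : G.Adj b c)
    (hcd : G.Adj c d) (had : G.Adj a d) (hac : ¬ G.Adj a c) (hbd : ¬ G.Adj b d)
    (hac' : a ≠ c) (hbd' : b ≠ d) :
    HasInducedCopy GraphC4 G := by
  refine hasInducedCopy_of_injective ![a, b, c, d] (fun i j h => ?_) (fun i j => ?_) <;>
    fin_cases i <;> fin_cases j <;>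
    simp_all [GraphC4, fromRel, G.adj_comm, hab.ne, hbc.ne, hcd.ne, had.ne, eq_comm]

lemma hasInducedCopy_graphDart {v₀ v₁ v₂ v₃ v₄ : V} (h01 : G.Adj v₀ v₁) (h02 : G.Adj v₀ v₂)
    (h12 : G.Adj v₁ v₂) (h04 : G.Adj v₀ v₄) (h24 : G.Adj v₂ v₄) (h03 : G.Adj v₀ v₃)
    (n13 : ¬ G.Adj v₁ v₃) (n23 : ¬ G.Adj v₂ v₃) (n34 : ¬ G.Adj v₃ v₄) (n14 : ¬ G.Adj v₁ v₄)
    (e13 : v₁ ≠ v₃) (e23 : v₂ ≠ v₃) (e34 : v₃ ≠ v₄) (e14 : v₁ ≠ v₄) :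
    HasInducedCopy GraphDart G := by
  refine hasInducedCopy_of_injective ![v₀, v₁, v₂, v₃, v₄] (fun i j h => ?_) (fun i j => ?_) <;>
    fin_cases i <;> fin_cases j <;>
    simp_all [GraphDart, fromRel, G.adj_comm, h01.ne, h02.ne, h12.ne, h04.ne, h24.ne, h03.ne,
      eq_comm]

lemma hasInducedCopy_graphFox {v₀ v₁ v₂ v₃ v₄ : V} (h01 : G.Adj v₀ v₁) (h02 : G.Adj v₀ v₂)
    (h03 : G.Adj v₀ v₃) (h04 : G.Adj v₀ v₄) (h12 : G.Adj v₁ v₂) (h13 : G.Adj v₁ v₃)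
    (h14 : G.Adj v₁ v₄) (n23 : ¬ G.Adj v₂ v₃) (n24 : ¬ G.Adj v₂ v₄) (n34 : ¬ G.Adj v₃ v₄)
    (e23 : v₂ ≠ v₃) (e24 : v₂ ≠ v₄) (e34 : v₃ ≠ v₄) :
    HasInducedCopy GraphFox G := by
  refine hasInducedCopy_of_injective ![v₀, v₁, v₂, v₃, v₄] (fun i j h => ?_) (fun i j => ?_) <;>
    fin_cases i <;> fin_cases j <;>
    simp_all [GraphFox, fromRel, G.adj_comm, h01.ne, h02.ne, h03.ne, h04.ne, h12.ne, h13.ne,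
      h14.ne, eq_comm]

lemma hasInducedCopy_graphGem {v₀ v₁ v₂ v₃ v₄ : V} (h01 : G.Adj v₀ v₁) (h12 : G.Adj v₁ v₂)
    (h23 : G.Adj v₂ v₃) (h04 : G.Adj v₀ v₄) (h14 : G.Adj v₁ v₄) (h24 : G.Adj v₂ v₄)
    (h34 : G.Adj v₃ v₄) (n02 : ¬ G.Adj v₀ v₂) (n03 : ¬ G.Adj v₀ v₃) (n13 : ¬ G.Adj v₁ v₃)
    (e02 : v₀ ≠ v₂) (e03 : v₀ ≠ v₃) (e13 : v₁ ≠ v₃) :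
    HasInducedCopy GraphGem G := by
  refine hasInducedCopy_of_injective ![v₀, v₁, v₂, v₃, v₄] (fun i j h => ?_) (fun i j => ?_) <;>
    fin_cases i <;> fin_cases j <;>
    simp_all [GraphGem, fromRel, G.adj_comm, h01.ne, h12.ne, h23.ne, h04.ne, h14.ne, h24.ne,
      h34.ne, eq_comm]

lemma SimpleGraph.Preconnected.eq_univ_of_adj_closed (hG : G.Preconnected) {S : Set V}
    (hS : S.Nonempty) (hclosed : ∀ v w, v ∈ S → G.Adj v w → w ∈ S) : S = Set.univ := by
  obtain ⟨a, ha⟩ := hS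
  refine Set.eq_univ_of_forall fun b => by_contra fun hb => ?_
  obtain ⟨p⟩ := hG a b
  obtain ⟨e, -, he, he'⟩ := p.exists_boundary_dart S ha hb
  exact he' (hclosed _ _ he e.adj)

section Modules

/-- The neighbourhood `N_G(M)` of `M`. -/
def outsideNeighbors (G : SimpleGraph V) (M : Set V) : Set V :=
  {v | v ∉ M ∧ ∃ a ∈ M, G.Adj v a}

lemma outsideNeighbors_nonempty (hG : G.Preconnected) {M : Set V} (hM : M.Nonempty)
    (hMu : M ≠ Set.univ) : (outsideNeighbors G M).Nonempty := by
  by_contra hN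
  exact hMu <| hG.eq_univ_of_adj_closed hM fun v w hv hvw =>
    by_contra fun hw => hN ⟨w, hw, v, hv, hvw.symm⟩

variable {M : Set V} {b d : V}

lemma IsModule.adj_of_mem_outsideNeighbors (hM : IsModule G M) {x a : V}
    (hx : x ∈ outsideNeighbors G M) (ha : a ∈ M) : G.Adj x a := by
  obtain ⟨hxM, a', ha', hxa'⟩ := hx
  exact (hM x hxM).resolve_right (fun h => h a' ha' hxa') a ha

lemma IsModule.isClique_outsideNeighbors (hC4 : ¬ HasInducedCopy GraphC4 G) (hM : IsModule G M)
    (hb : b ∈ M) (hd : d ∈ M) (hbd : b ≠ d) (hnbd : ¬ G.Adj b d) :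
    G.IsClique (outsideNeighbors G M) := by
  intro x hx y hy hxy
  by_contra hnxy
  exact hC4 (hasInducedCopy_graphC4 (hM.adj_of_mem_outsideNeighbors hx hb).symm
    (hM.adj_of_mem_outsideNeighbors hx hd) (hM.adj_of_mem_outsideNeighbors hy hd).symm
    (hM.adj_of_mem_outsideNeighbors hy hb).symm hnbd hnxy hbd hxy)

lemma IsModule.not_adj_of_mem_outsideNeighbors (hDart : ¬ HasInducedCopy GraphDart G)
    (hFox : ¬ HasInducedCopy GraphFox G) (hM : IsModule G M) (hb : b ∈ M) (hd : d ∈ M)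
    (hbd : b ≠ d) (hnbd : ¬ G.Adj b d) (hN : G.IsClique (outsideNeighbors G M)) {u w z : V}
    (hu : u ∈ outsideNeighbors G M) (hw : w ∈ outsideNeighbors G M) (huw : u ≠ w) (hzM : z ∉ M)
    (hzN : z ∉ outsideNeighbors G M) : ¬ G.Adj w z := by
  intro hwz
  have hzb : ¬ G.Adj b z := fun h => hzN ⟨hzM, b, hb, h.symm⟩
  have hzd : ¬ G.Adj d z := fun h => hzN ⟨hzM, d, hd, h.symm⟩
  have hbz : b ≠ z := ne_of_mem_of_not_mem hb hzM
  have hdz : d ≠ z := ne_of_mem_of_not_mem hd hzM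
  have hwu : G.Adj w u := hN hw hu huw.symm
  by_cases huz : G.Adj u z
  · exact hFox (hasInducedCopy_graphFox hwu (hM.adj_of_mem_outsideNeighbors hw hb)
      (hM.adj_of_mem_outsideNeighbors hw hd) hwz (hM.adj_of_mem_outsideNeighbors hu hb)
      (hM.adj_of_mem_outsideNeighbors hu hd) huz hnbd hzb hzd hbd hbz hdz)
  · exact hDart (hasInducedCopy_graphDart (hM.adj_of_mem_outsideNeighbors hw hb) hwu
      (hM.adj_of_mem_outsideNeighbors hu hb).symm (hM.adj_of_mem_outsideNeighbors hw hd)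
      (hM.adj_of_mem_outsideNeighbors hu hd) hwz hzb huz (fun h => hzd h.symm) hnbd hbz
      (ne_of_mem_of_not_mem hu hzN) hdz.symm hbd)

lemma IsModule.isUniversal_of_mem_outsideNeighbors (hG : G.Preconnected)
    (hC4 : ¬ HasInducedCopy GraphC4 G) (hDart : ¬ HasInducedCopy GraphDart G)
    (hFox : ¬ HasInducedCopy GraphFox G) (hM : IsModule G M) (hb : b ∈ M) (hd : d ∈ M)
    (hbd : b ≠ d) (hnbd : ¬ G.Adj b d) (hN : (outsideNeighbors G M).Nontrivial) {u : V}
    (hu : u ∈ outsideNeighbors G M) : G.IsUniversal u := by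
  have hNc := hM.isClique_outsideNeighbors hC4 hb hd hbd hnbd
  have hcover : M ∪ outsideNeighbors G M = Set.univ := by
    refine hG.eq_univ_of_adj_closed ⟨b, .inl hb⟩ fun w z hw hwz => by_contra fun hz => ?_
    have hzM : z ∉ M := fun h => hz (.inl h)
    have hzN : z ∉ outsideNeighbors G M := fun h => hz (.inr h)
    rcases hw with hw | hw
    · exact hzN ⟨hzM, w, hw, hwz.symm⟩
    · obtain ⟨u', hu', hu'w⟩ := hN.exists_ne w
      exact hM.not_adj_of_mem_outsideNeighbors hDart hFox hb hd hbd hnbd hNc hu' hw hu'w hzM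
        hzN hwz
  intro t hut
  rcases hcover.symm ▸ Set.mem_univ t with ht | ht
  · exact hM.adj_of_mem_outsideNeighbors hu ht
  · exact hNc hu ht hut

end Modules

section UniversalVertices

variable {x y : V}

lemma SimpleGraph.IsUniversal.adj_of_adj_of_adj (hC4 : ¬ HasInducedCopy GraphC4 G)
    (hDart : ¬ HasInducedCopy GraphDart G) (hGem : ¬ HasInducedCopy GraphGem G)
    (hx : G.IsUniversal x) {a m c : V} (hm : ¬ G.IsUniversal m) (ham : G.Adj a m)
    (hmc : G.Adj m c) (hac : a ≠ c) : G.Adj a c := by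
  by_contra hnac
  obtain ⟨w, hmw, hnmw⟩ : ∃ w, m ≠ w ∧ ¬ G.Adj m w := by
    simpa [SimpleGraph.IsUniversal] using hm
  have hxa : x ≠ a := by rintro rfl; exact hnac (hx hac)
  have hxc : x ≠ c := by rintro rfl; exact hnac (hx hac.symm).symm
  have hxm : x ≠ m := by rintro rfl; exact hm hx
  have hxw : x ≠ w := by rintro rfl; exact hnmw (hx hmw.symm).symm
  have hwa : w ≠ a := by rintro rfl; exact hnmw ham.symm
  have hwc : w ≠ c := by rintro rfl; exact hnmw hmc
  by_cases hwa' : G.Adj w a <;> by_cases hwc' : G.Adj w c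
  · exact hC4 (hasInducedCopy_graphC4 ham hmc hwc'.symm hwa'.symm hnac hnmw hac hmw)
  · exact hGem (hasInducedCopy_graphGem hwa' ham hmc (hx hxw).symm (hx hxa).symm
      (hx hxm).symm (hx hxc).symm (fun h => hnmw h.symm) hwc' hnac hmw.symm hwc hac)
  · exact hGem (hasInducedCopy_graphGem hwc' hmc.symm ham.symm (hx hxw).symm
      (hx hxc).symm (hx hxm).symm (hx hxa).symm (fun h => hnmw h.symm) hwa'
      (fun h => hnac h.symm) hmw.symm hwa hac.symm)
  · exact hDart (hasInducedCopy_graphDart (hx hxa) (hx hxm) ham (hx hxc) hmc (hx hxw)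
      (fun h => hwa' h.symm) hnmw hwc' hnac hwa.symm hmw hwc hac)

lemma SimpleGraph.IsUniversal.adj_of_not_adj_of_not_adj (hFox : ¬ HasInducedCopy GraphFox G)
    (hx : G.IsUniversal x) (hy : G.IsUniversal y) (hxy : x ≠ y) {p v w : V}
    (hpv : ¬ G.Adj p v) (hpw : ¬ G.Adj p w) (hpv' : p ≠ v) (hpw' : p ≠ w) (hvw : v ≠ w) :
    G.Adj v w := by
  have hne : ∀ {z t}, G.IsUniversal z → ¬ G.Adj p t → p ≠ t → z ≠ p ∧ z ≠ t := by
    intro z t hz hpt hpt'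
    refine ⟨?_, ?_⟩ <;> rintro rfl
    · exact hpt (hz hpt')
    · exact hpt (hz hpt'.symm).symm
  obtain ⟨hxp, hxv⟩ := hne hx hpv hpv'
  obtain ⟨-, hxw⟩ := hne hx hpw hpw'
  obtain ⟨hyp, hyv⟩ := hne hy hpv hpv'
  obtain ⟨-, hyw⟩ := hne hy hpw hpw'
  by_contra hnvw
  exact hFox (hasInducedCopy_graphFox (hx hxy) (hx hxp) (hx hxv) (hx hxw) (hy hyp) (hy hyv)
    (hy hyw) hpv hpw hnvw hpv' hpw' hvw)

end UniversalVertices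

lemma SimpleGraph.IsUniversal.hasUniversalTwoCliquePartition (hC4 : ¬ HasInducedCopy GraphC4 G)
    (hDart : ¬ HasInducedCopy GraphDart G) (hFox : ¬ HasInducedCopy GraphFox G)
    (hGem : ¬ HasInducedCopy GraphGem G) {x y p : V} (hx : G.IsUniversal x)
    (hy : G.IsUniversal y) (hxy : x ≠ y) (hp : ¬ G.IsUniversal p) :
    HasUniversalTwoCliquePartition G := by
  refine ⟨{v | G.IsUniversal v}, {v | ¬ G.IsUniversal v ∧ (v = p ∨ G.Adj p v)},
    {v | ¬ G.IsUniversal v ∧ ¬ (v = p ∨ G.Adj p v)}, Set.disjoint_left.2 fun v hv hc => hc.1 hv,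
    Set.disjoint_left.2 fun v hv hc => hc.1 hv, Set.disjoint_left.2 fun v hv hc => hc.2 hv.2,
    ?_, fun u hu v hvu => hu hvu.symm, ?_, ?_, ?_⟩
  · ext v
    simp only [Set.mem_union, Set.mem_ofPred_eq, Set.mem_univ, iff_true]
    tauto
  · rintro v ⟨-, rfl | hpv⟩ w ⟨-, rfl | hpw⟩ hvw
    · exact absurd rfl hvw
    · exact hpw
    · exact hpv.symm
    · exact hx.adj_of_adj_of_adj hC4 hDart hGem hp hpv.symm hpw hvw
  · rintro v ⟨-, hv⟩ w ⟨-, hw⟩ hvw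
    obtain ⟨hvp, hpv⟩ := not_or.1 hv
    obtain ⟨hwp, hpw⟩ := not_or.1 hw
    exact hx.adj_of_not_adj_of_not_adj hFox hy hxy hpv hpw (Ne.symm hvp) (Ne.symm hwp) hvw
  · rintro a ⟨ha, rfl | hpa⟩ c ⟨-, hc⟩ hac
    · exact hc (.inr hac)
    · exact hc (.inr (hx.adj_of_adj_of_adj hC4 hDart hGem ha hpa hac fun h => hc (.inl h.symm)))

end

theorem stmt_4_general {V : Type*} (G : SimpleGraph V) (hconn : G.Connected)
    (hF : FFree G) (hnc : ¬ G.IsClique (Set.univ : Set V))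
    (hnp : ¬ ∃ U C1 C2 : Set V,
      Disjoint U C1 ∧ Disjoint U C2 ∧ Disjoint C1 C2 ∧ U ∪ C1 ∪ C2 = Set.univ ∧
      (∀ u ∈ U, ∀ v : V, v ≠ u → G.Adj u v) ∧
      G.IsClique C1 ∧ G.IsClique C2 ∧ (∀ a ∈ C1, ∀ b ∈ C2, ¬ G.Adj a b)) :
    ∀ M : Set V, IsMaximalStrongModule G M → ¬ G.IsClique M →
      {v : V | v ∉ M ∧ ∃ a ∈ M, G.Adj v a}.ncard = 1 := by
  obtain ⟨hC4, -, hDart, hFox, hGem⟩ := hF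
  rintro M ⟨⟨hM, -⟩, -, hMu, -⟩ hMc
  obtain ⟨b, hb, d, hd, hbd, hnbd⟩ : ∃ b ∈ M, ∃ d ∈ M, b ≠ d ∧ ¬ G.Adj b d := by
    simpa [SimpleGraph.isClique_iff, Set.Pairwise] using hMc
  obtain ⟨p, hp⟩ : ∃ p, ¬ G.IsUniversal p := by
    by_contra! h
    exact hnc fun v _ w _ hvw => h v hvw
  have huniv {u : V} (hN : (outsideNeighbors G M).Nontrivial) (hu : u ∈ outsideNeighbors G M) :=
    hM.isUniversal_of_mem_outsideNeighbors hconn.preconnected hC4 hDart hFox hb hd hbd hnbd hN hu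
  refine Set.ncard_eq_one.2 <| Set.exists_eq_singleton_iff_nonempty_subsingleton.2
    ⟨outsideNeighbors_nonempty hconn.preconnected ⟨b, hb⟩ hMu, fun x hx y hy => ?_⟩
  by_contra hxy
  have hN : (outsideNeighbors G M).Nontrivial := ⟨x, hx, y, hy, hxy⟩
  exact hnp ((huniv hN hx).hasUniversalTwoCliquePartition hC4 hDart hFox hGem (huniv hN hy) hxy hp)

/-- Under the same hypotheses, every maximal strong module that
does not induce a clique has exactly one neighbor outside it. -/
theorem stmt_4 {V : Type*} [Fintype V] (G : SimpleGraph V) (hconn : G.Connected)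
    (hF : FFree G) (hnc : ¬ G.IsClique (Set.univ : Set V))
    (hnp : ¬ ∃ U C1 C2 : Set V,
      Disjoint U C1 ∧ Disjoint U C2 ∧ Disjoint C1 C2 ∧ U ∪ C1 ∪ C2 = Set.univ ∧
      (∀ u ∈ U, ∀ v : V, v ≠ u → G.Adj u v) ∧
      G.IsClique C1 ∧ G.IsClique C2 ∧ (∀ a ∈ C1, ∀ b ∈ C2, ¬ G.Adj a b)) :
    ∀ M : Set V, IsMaximalStrongModule G M → ¬ G.IsClique M →
      {v : V | v ∉ M ∧ ∃ a ∈ M, G.Adj v a}.ncard = 1 :=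
  stmt_4_general G hconn hF hnc hnp
end

section
/- Let G be a finite simple graph such that the quotient graph Q̃(G) is prime. Then for every partition P of V(G) into at least two modules of G, the quotient graph defined by P contains Q̃(G) as an induced subgraph (up to isomorphism). -/
open SimpleGraph

/-!
Every part `M` of `P` lies inside a maximal strong module: otherwise every maximal strong module
meeting `M` lies inside `M`, and those form a module of the prime graph `Q̃(G)` that is neither
empty, nor a singleton, nor everything. As the parts cover `V(G)`, each maximal strong module
therefore contains a part, and choosing one part in each embeds `Q̃(G)` into the quotient by `P`:
between two disjoint modules a single edge forces all edges.
-/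

section

variable {V : Type*} {G : SimpleGraph V}

theorem IsModule.adj_of_adj {M N : Set V} (hM : IsModule G M) (hN : IsModule G N)
    (hMN : Disjoint M N) {a b : V} (ha : a ∈ M) (hb : b ∈ N) (hab : G.Adj a b) :
    ∀ a' ∈ M, ∀ b' ∈ N, G.Adj a' b' := by
  have hab' : ∀ b' ∈ N, G.Adj a b' :=
    (hN a (Set.disjoint_left.1 hMN ha)).resolve_right fun h => h b hb hab
  intro a' ha' b' hb'
  have hb'a : ∀ a' ∈ M, G.Adj b' a' :=
    (hM b' (Set.disjoint_right.1 hMN hb')).resolve_right fun h => h a ha (hab' b' hb').symm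
  exact (hb'a a' ha').symm

structure IsDisjointModuleFamily (G : SimpleGraph V) (Q : Set (Set V)) : Prop where
  isModule : ∀ S ∈ Q, IsModule G S
  nonempty : ∀ S ∈ Q, S.Nonempty
  pairwiseDisjoint : Q.PairwiseDisjoint id

namespace IsDisjointModuleFamily

variable {Q : Set (Set V)}

theorem eq_of_mem (hQ : IsDisjointModuleFamily G Q) {S T : Q} {v : V} (hS : v ∈ (S : Set V))
    (hT : v ∈ (T : Set V)) : S = T :=
  Subtype.ext <| hQ.pairwiseDisjoint.elim S.2 T.2 <| Set.not_disjoint_iff.2 ⟨v, hS, hT⟩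

theorem quotientOn_adj_of_adj (hQ : IsDisjointModuleFamily G Q) {A B : Q} (hAB : A ≠ B)
    {a b : V} (ha : a ∈ (A : Set V)) (hb : b ∈ (B : Set V)) (hab : G.Adj a b) :
    (QuotientOn G Q).Adj A B :=
  ⟨hAB, (hQ.isModule A A.2).adj_of_adj (hQ.isModule B B.2)
    (hQ.pairwiseDisjoint A.2 B.2 (Subtype.coe_ne_coe.2 hAB)) ha hb hab⟩

theorem isModule_quotientOn_setOf_subset (hQ : IsDisjointModuleFamily G Q) {M : Set V}
    (hM : IsModule G M) : IsModule (QuotientOn G Q) {S | (S : Set V) ⊆ M} := by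
  intro B hBM
  obtain ⟨x, hxB, hxM⟩ := Set.not_subset.1 hBM
  rcases hM x hxM with hall | hnone
  · refine Or.inl fun A hAM => ?_
    have hBA : B ≠ A := by rintro rfl; exact hBM hAM
    obtain ⟨a, ha⟩ := hQ.nonempty A A.2
    exact hQ.quotientOn_adj_of_adj hBA hxB ha (hall a (hAM ha))
  · refine Or.inr fun A hAM hBA => ?_
    obtain ⟨a, ha⟩ := hQ.nonempty A A.2
    exact hnone a (hAM ha) (hBA.2 x hxB a ha)

theorem hasInducedCopy_quotientOn (hQ : IsDisjointModuleFamily G Q) {P : Set (Set V)}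
    (hP : ∀ M ∈ P, M.Nonempty) (hsub : ∀ S ∈ Q, ∃ M ∈ P, M ⊆ S) :
    HasInducedCopy (QuotientOn G Q) (QuotientOn G P) := by
  choose f hfP hfS using hsub
  let g : Q → P := fun S => ⟨f S S.2, hfP S S.2⟩
  have hg : ∀ S : Q, (g S : Set V) ⊆ S := fun S => hfS S S.2
  have hg_inj : Function.Injective g := fun S T hST => by
    obtain ⟨v, hv⟩ := hP _ (g S).2
    exact hQ.eq_of_mem (hg S hv) (hg T (hST ▸ hv))
  refine ⟨⟨g, hg_inj⟩, fun S T => ⟨fun hadj => ?_, fun hadj => ?_⟩⟩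
  · obtain ⟨a, ha⟩ := hP _ (g S).2
    obtain ⟨b, hb⟩ := hP _ (g T).2
    exact hQ.quotientOn_adj_of_adj (fun h => hadj.1 (congrArg g h)) (hg S ha) (hg T hb)
      (hadj.2 a ha b hb)
  · exact ⟨hg_inj.ne hadj.1, fun a ha b hb => hadj.2 a (hg S ha) b (hg T hb)⟩

end IsDisjointModuleFamily

theorem isStrongModule_singleton (v : V) : IsStrongModule G {v} := by
  refine ⟨fun x hx => ?_, fun M _ hM => Or.inl ?_⟩
  · by_cases hxv : G.Adj x v
    · exact Or.inl fun a ha => ha ▸ hxv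
    · exact Or.inr fun a ha => ha ▸ hxv
  · obtain ⟨w, rfl, hw⟩ := hM
    exact Set.singleton_subset_iff.2 hw

theorem IsMaximalStrongModule.eq_of_inter_nonempty {S T : Set V}
    (hS : IsMaximalStrongModule G S) (hT : IsMaximalStrongModule G T) (hST : (S ∩ T).Nonempty) :
    S = T := by
  by_contra hne
  rcases hS.1.2 T hT.1.1 hST with h | h
  · exact hT.2.2.1 (hS.2.2.2 T hT.1 (h.ssubset_of_ne hne))
  · exact hS.2.2.1 (hT.2.2.2 S hS.1 (h.ssubset_of_ne (Ne.symm hne)))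

theorem isDisjointModuleFamily_maximalStrongModules :
    IsDisjointModuleFamily G {S | IsMaximalStrongModule G S} where
  isModule _ hS := hS.1.1
  nonempty _ hS := hS.2.1
  pairwiseDisjoint _ hS _ hT hST := Classical.not_not.1 fun h =>
    hST (hS.eq_of_inter_nonempty hT (Set.not_disjoint_iff_nonempty_inter.1 h))

theorem exists_isMaximalStrongModule_mem [Finite V] [Nontrivial V] (v : V) :
    ∃ S, IsMaximalStrongModule G S ∧ v ∈ S := by
  obtain ⟨S, ⟨hS, hvS, hSV⟩, hmax⟩ :=
    (Set.toFinite {M : Set V | IsStrongModule G M ∧ v ∈ M ∧ M ≠ Set.univ}).exists_maximal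
      ⟨{v}, isStrongModule_singleton v, rfl, Set.singleton_ne_univ v⟩
  refine ⟨S, ⟨hS, ⟨v, hvS⟩, hSV, fun T hT hST => ?_⟩, hvS⟩
  by_contra hTV
  exact hST.not_subset (hmax ⟨hT, hST.subset hvS, hTV⟩ hST.subset)

theorem IsModule.exists_isMaximalStrongModule_superset [Finite V]
    (hp : IsPrimeGraph (QuotientGraph G)) {M : Set V} (hM : IsModule G M)
    (hne : M.Nonempty) (htop : M ≠ Set.univ) :
    ∃ S, IsMaximalStrongModule G S ∧ M ⊆ S := by
  obtain ⟨u, huM⟩ := hne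
  obtain ⟨w, hwM⟩ := (Set.ne_univ_iff_exists_notMem M).1 htop
  have : Nontrivial V := nontrivial_of_ne u w (ne_of_mem_of_not_mem huM hwM)
  by_contra! hno
  set T : Set {S : Set V | IsMaximalStrongModule G S} := {S | (S : Set V) ⊆ M}
  have hT : IsModule (QuotientGraph G) T :=
    isDisjointModuleFamily_maximalStrongModules.isModule_quotientOn_setOf_subset hM
  -- the maximal strong module through a vertex of `M` cannot contain `M`, so it lies in `M`
  have hmemT : ∀ v ∈ M, ∃ S ∈ T, v ∈ (S : Set V) := fun v hv => by
    obtain ⟨S, hS, hvS⟩ := exists_isMaximalStrongModule_mem (G := G) v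
    exact ⟨⟨S, hS⟩, (hS.1.2 M hM ⟨v, hvS, hv⟩).resolve_right (hno S hS), hvS⟩
  rcases hp.2 T hT with hT | hT | ⟨S₀, hT⟩
  · obtain ⟨S, hST, -⟩ := hmemT u huM
    exact hT.subset hST
  · obtain ⟨S, hS, hwS⟩ := exists_isMaximalStrongModule_mem (G := G) w
    have hST : (⟨S, hS⟩ : {S : Set V | IsMaximalStrongModule G S}) ∈ T := hT ▸ Set.mem_univ _
    exact hwM (hST hwS)
  · refine hno S₀ S₀.2 fun v hv => ?_
    obtain ⟨S, hST, hvS⟩ := hmemT v hv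
    exact (hT ▸ hST : S ∈ ({S₀} : Set _)) ▸ hvS

theorem ne_univ_of_mem_of_two_le_card {P : Set (Set V)} (hne : ∀ M ∈ P, M.Nonempty)
    (hdisj : P.PairwiseDisjoint id) (hcard : 2 ≤ Nat.card P) {M : Set V} (hM : M ∈ P) :
    M ≠ Set.univ := by
  have : Finite P := Nat.finite_of_card_ne_zero (by omega)
  have : Nontrivial P := Finite.one_lt_card_iff_nontrivial.1 hcard
  obtain ⟨N, hNM⟩ := exists_ne (⟨M, hM⟩ : P)
  obtain ⟨v, hv⟩ := hne N N.2
  rintro rfl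
  exact Set.disjoint_right.1 (hdisj hM N.2 fun h => hNM (Subtype.ext h.symm)) hv (Set.mem_univ v)

end

/-- If Q̃(G) is prime, then every quotient graph of `G` defined by
a partition of `V(G)` into at least two modules contains Q̃(G) as an induced
subgraph. -/
theorem stmt_6 {V : Type*} [Fintype V] (G : SimpleGraph V)
    (hp : IsPrimeGraph (QuotientGraph G)) (P : Set (Set V))
    (hmod : ∀ M ∈ P, IsModule G M) (hne : ∀ M ∈ P, M.Nonempty)
    (hdisj : P.PairwiseDisjoint id) (hcover : ⋃₀ P = Set.univ)
    (hcard : 2 ≤ Nat.card P) :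
    HasInducedCopy (QuotientGraph G) (QuotientOn G P) := by
  refine isDisjointModuleFamily_maximalStrongModules.hasInducedCopy_quotientOn hne fun S hS => ?_
  obtain ⟨v, hvS⟩ := hS.2.1
  obtain ⟨M, hMP, hvM⟩ : v ∈ ⋃₀ P := hcover ▸ Set.mem_univ v
  obtain ⟨S', hS', hMS'⟩ := (hmod M hMP).exists_isMaximalStrongModule_superset hp (hne M hMP)
    (ne_univ_of_mem_of_two_le_card hne hdisj hcard hMP)
  exact ⟨M, hMP, hS'.eq_of_inter_nonempty hS ⟨v, hMS' hvM, hvS⟩ ▸ hMS'⟩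
end

section
/- Every prime finite simple graph contains an induced path on four vertices (an induced P4). -/
open SimpleGraph

/-!
In a `P₄`-free graph, a vertex `z` outside the closed neighbourhood of `v` cannot tell apart two
non-adjacent neighbours `a`, `b` of `v`: otherwise `a - v - b - z` (or `b - v - a - z`) is an
induced `P₄`. Hence every connected component of the complement of `G[N(v)]` is a module of `G`.
In a prime graph these components are singletons, so every neighbourhood is a clique. Then the
two ends of an edge have the same neighbours, and form a nontrivial module.
-/

open Set

section

variable {V : Type*} {G : SimpleGraph V}

theorem hasInducedCopy_P4_of_path {a b c d : V} (hab : G.Adj a b) (hbc : G.Adj b c)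
    (hcd : G.Adj c d) (hac : ¬ G.Adj a c) (had : ¬ G.Adj a d) (hbd : ¬ G.Adj b d) :
    HasInducedCopy GraphP4 G := by
  have hac' : a ≠ c := by rintro rfl; exact had hcd
  have had' : a ≠ d := by rintro rfl; exact hac hcd.symm
  have hbd' : b ≠ d := by rintro rfl; exact had hab
  refine ⟨⟨![a, b, c, d], fun i j hij => ?_⟩, fun i j => ?_⟩
  · fin_cases i <;> fin_cases j <;> simp_all [hab.ne, hbc.ne, hcd.ne, eq_comm]
  · show G.Adj (![a, b, c, d] i) (![a, b, c, d] j) ↔ _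
    fin_cases i <;> fin_cases j <;>
      simp_all [GraphP4, SimpleGraph.fromRel_adj, adj_comm]

theorem adj_iff_of_not_adj_of_mem_neighborSet (hP4 : ¬ HasInducedCopy GraphP4 G) {v a b z : V}
    (ha : a ∈ G.neighborSet v) (hb : b ∈ G.neighborSet v) (hab : ¬ G.Adj a b)
    (hvz : ¬ G.Adj v z) : G.Adj z a ↔ G.Adj z b := by
  rw [mem_neighborSet] at ha hb
  constructor
  · intro hza
    by_contra hzb
    exact hP4 (hasInducedCopy_P4_of_path hb.symm ha hza.symm (fun h => hab h.symm)
      (fun h => hzb h.symm) hvz)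
  · intro hzb
    by_contra hza
    exact hP4 (hasInducedCopy_P4_of_path ha.symm hb hzb.symm hab (fun h => hza h.symm) hvz)

/-- `K ⊆ S` is a union of connected components of the complement of `G[S]`. -/
def IsCoclosedIn (G : SimpleGraph V) (S K : Set V) : Prop :=
  K ⊆ S ∧ ∀ a ∈ K, ∀ b ∈ S, a ≠ b → ¬ G.Adj a b → b ∈ K

theorem isModule_of_minimal_isCoclosedIn (hP4 : ¬ HasInducedCopy GraphP4 G) {v x : V}
    {K : Set V} (hK : Minimal (fun K => x ∈ K ∧ IsCoclosedIn G (G.neighborSet v) K) K) :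
    IsModule G K := by
  obtain ⟨hxK, hKN, hKclosed⟩ := hK.prop
  intro z hzK
  by_cases hzv : z = v
  · subst hzv
    exact Or.inl fun a ha => hKN ha
  by_cases hvz : G.Adj v z
  · refine Or.inl fun a ha => ?_
    by_contra hza
    exact hzK (hKclosed a ha z hvz (ne_of_mem_of_not_mem ha hzK) fun h => hza h.symm)
  have hsplit : IsCoclosedIn G (G.neighborSet v) {k ∈ K | G.Adj z k ↔ G.Adj z x} := by
    refine ⟨fun k hk => hKN hk.1, fun a ha b hb hab hnab => ⟨hKclosed a ha.1 b hb hab hnab, ?_⟩⟩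
    rw [← ha.2]
    exact (adj_iff_of_not_adj_of_mem_neighborSet hP4 (hKN ha.1) hb hnab hvz).symm
  have hKsub : K ⊆ {k ∈ K | G.Adj z k ↔ G.Adj z x} :=
    hK.le_of_le ⟨⟨hxK, Iff.rfl⟩, hsplit⟩ fun k hk => hk.1
  by_cases hzx : G.Adj z x
  · exact Or.inl fun a ha => (hKsub ha).2.2 hzx
  · exact Or.inr fun a ha h => hzx ((hKsub ha).2.1 h)

theorem IsPrimeGraph.finite (hp : IsPrimeGraph G) : Finite V :=
  Nat.finite_of_card_ne_zero (by have := hp.1; omega)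

theorem IsPrimeGraph.not_isModule_pair (hp : IsPrimeGraph G) {a b : V} (hab : a ≠ b) :
    ¬ IsModule G {a, b} := by
  intro hM
  rcases hp.2 _ hM with h | h | ⟨w, h⟩
  · exact (insert_nonempty a {b}).ne_empty h
  · have hcard := hp.1
    rw [← Set.ncard_univ, ← h, Set.ncard_pair hab] at hcard
    omega
  · have ha : a ∈ ({w} : Set V) := h ▸ mem_insert a {b}
    have hb : b ∈ ({w} : Set V) := h ▸ mem_insert_of_mem a rfl
    exact hab (ha.trans hb.symm)

theorem isModule_pair {a b : V} (h : ∀ z, z ≠ a → z ≠ b → (G.Adj z a ↔ G.Adj z b)) :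
    IsModule G {a, b} := by
  intro z hz
  simp only [mem_insert_iff, mem_singleton_iff, not_or] at hz
  by_cases hza : G.Adj z a
  · exact Or.inl fun c hc => by rcases hc with rfl | rfl <;> simp_all
  · exact Or.inr fun c hc => by rcases hc with rfl | rfl <;> simp_all

theorem IsPrimeGraph.exists_adj (hp : IsPrimeGraph G) : ∃ a b, G.Adj a b := by
  by_contra! hG
  have := hp.finite
  have : Nontrivial V := Finite.one_lt_card_iff_nontrivial.1 (by have := hp.1; omega)
  obtain ⟨a, b, hab⟩ := exists_pair_ne V
  exact hp.not_isModule_pair hab (isModule_pair fun z _ _ => by simp [hG])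

theorem IsPrimeGraph.adj_of_mem_neighborSet (hp : IsPrimeGraph G)
    (hP4 : ¬ HasInducedCopy GraphP4 G) {v x y : V} (hx : x ∈ G.neighborSet v)
    (hy : y ∈ G.neighborSet v) (hxy : x ≠ y) : G.Adj x y := by
  have := hp.finite
  obtain ⟨K, -, hK⟩ := exists_minimal_le_of_wellFoundedLT
    (fun K => x ∈ K ∧ IsCoclosedIn G (G.neighborSet v) K) _
    ⟨hx, subset_rfl, fun _ _ b hb _ _ => hb⟩
  obtain ⟨hxK, hKN, hKclosed⟩ := hK.prop
  by_contra hnxy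
  rcases hp.2 K (isModule_of_minimal_isCoclosedIn hP4 hK) with rfl | rfl | ⟨w, rfl⟩
  · exact hxK
  · exact G.loopless.irrefl v (hKN (mem_univ v))
  · exact hxy (hxK.trans (hKclosed x hxK y hy hxy hnxy).symm)

end

theorem stmt_9_general {W : Type*} (H : SimpleGraph W)
    (hp : IsPrimeGraph H) : HasInducedCopy GraphP4 H := by
  by_contra hP4
  obtain ⟨a, b, hab⟩ := hp.exists_adj
  refine hp.not_isModule_pair hab.ne
    (isModule_pair fun z hza hzb => ⟨fun hza' => ?_, fun hzb' => ?_⟩)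
  · exact hp.adj_of_mem_neighborSet hP4 hza'.symm hab hzb
  · exact hp.adj_of_mem_neighborSet hP4 hzb'.symm hab.symm hza

/-- Every prime finite graph contains an induced `P₄`. -/
theorem stmt_9 {W : Type*} [Fintype W] (H : SimpleGraph W)
    (hp : IsPrimeGraph H) : HasInducedCopy GraphP4 H :=
  stmt_9_general H hp
end

section
/- Every connected finite simple graph that contains no induced path on four vertices and no induced cycle on four vertices (i.e., every connected trivially perfect graph) has a universal vertex, that is, a vertex adjacent to all other vertices of the graph. -/
open SimpleGraph

/-!
A vertex `v` of maximum degree is universal. Otherwise a walk to a non-neighbour of `v` yields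
`v ~ w ~ x` with `x ≁ v`, `x ≠ v`. As `deg w ≤ deg v` and `x` is a neighbour of `w` missed by `v`,
some neighbour `y ≠ w` of `v` is missed by `w`, and then `y v w x` induces a `P₄`, or a `C₄` if
`y ~ x`.
-/

namespace SimpleGraph

variable {V : Type*} {G : SimpleGraph V}

lemma Reachable.exists_adj_adj_not_adj_ne {u v : V} (h : G.Reachable u v) (huv : u ≠ v)
    (hvu : ¬G.Adj v u) : ∃ w x, G.Adj v w ∧ G.Adj w x ∧ ¬G.Adj v x ∧ x ≠ v := by
  obtain ⟨p⟩ := h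
  induction p with
  | nil => exact absurd rfl huv
  | @cons u y v huy q ih =>
    by_cases hyv : y = v
    · subst hyv
      exact absurd huy.symm hvu
    by_cases hvy : G.Adj v y
    · exact ⟨y, u, hvy, huy.symm, hvu, huv⟩
    · exact ih hyv hvy

lemma exists_adj_not_adj_of_degree_le [Fintype V] [DecidableRel G.Adj] {v w x : V}
    (hvw : G.Adj v w) (hwx : G.Adj w x) (hvx : ¬G.Adj v x) (hxv : x ≠ v)
    (hdeg : G.degree w ≤ G.degree v) : ∃ y, G.Adj v y ∧ ¬G.Adj w y ∧ y ≠ w := by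
  classical
  by_contra! h
  have hsub : (G.neighborFinset v).erase w ⊆ (G.neighborFinset w).erase v := by
    intro z hz
    simp only [Finset.mem_erase, mem_neighborFinset] at hz ⊢
    exact ⟨hz.2.ne', not_not.1 fun hwz => hz.1 (h z hz.2 hwz)⟩
  have hssub : (G.neighborFinset v).erase w ⊂ (G.neighborFinset w).erase v :=
    (Finset.ssubset_iff_of_subset hsub).2
      ⟨x, by simp [hxv, hwx], by simp [hvx]⟩
  have hlt := Finset.card_lt_card hssub
  rw [Finset.card_erase_of_mem (by simpa using hvw),
    Finset.card_erase_of_mem (by simpa using hvw.symm)] at hlt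
  simp only [card_neighborFinset_eq_degree] at hlt
  have : 0 < G.degree w := G.degree_pos_iff_exists_adj w |>.2 ⟨x, hwx⟩
  omega

end SimpleGraph

open SimpleGraph

lemma hasInducedCopy_graphP4_or_graphC4 {V : Type*} {G : SimpleGraph V} {y v w x : V}
    (hyv : G.Adj y v) (hvw : G.Adj v w) (hwx : G.Adj w x) (hyw : ¬G.Adj y w) (hvx : ¬G.Adj v x)
    (hyw' : y ≠ w) (hvx' : v ≠ x) : HasInducedCopy GraphP4 G ∨ HasInducedCopy GraphC4 G := by
  have hyx : y ≠ x := by rintro rfl; exact hvx hyv.symm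
  have hinj : Function.Injective ![y, v, w, x] := by
    intro a b hab
    fin_cases a <;> fin_cases b <;> simp_all [hyv.ne, hvw.ne, hwx.ne, hyw'.symm, hvx'.symm,
      hyx.symm, hyv.ne', hvw.ne', hwx.ne']
  by_cases hxy : G.Adj y x
  · right
    refine ⟨⟨![y, v, w, x], hinj⟩, fun a b => ?_⟩
    fin_cases a <;> fin_cases b <;>
      simp_all [GraphC4, fromRel_adj, G.adj_comm]
  · left
    refine ⟨⟨![y, v, w, x], hinj⟩, fun a b => ?_⟩
    fin_cases a <;> fin_cases b <;>
      simp_all [GraphP4, fromRel_adj, G.adj_comm]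

/-- Every connected trivially perfect graph (no induced `P₄` or
`C₄`) has a universal vertex. -/
theorem stmt_12 {V : Type*} [Fintype V] (G : SimpleGraph V) (hconn : G.Connected)
    (hP4 : ¬ HasInducedCopy GraphP4 G) (hC4 : ¬ HasInducedCopy GraphC4 G) :
    ∃ v : V, ∀ u : V, u ≠ v → G.Adj v u := by
  classical
  have := hconn.nonempty
  obtain ⟨v, hv⟩ := G.exists_maximal_degree_vertex
  by_contra! hnone
  obtain ⟨u, huv, hvu⟩ := hnone v
  obtain ⟨w, x, hvw, hwx, hvx, hxv⟩ := (hconn u v).exists_adj_adj_not_adj_ne huv hvu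
  obtain ⟨y, hvy, hwy, hyw⟩ :=
    exists_adj_not_adj_of_degree_le hvw hwx hvx hxv (hv ▸ G.degree_le_maxDegree w)
  rcases hasInducedCopy_graphP4_or_graphC4 hvy.symm hvw hwx (fun h => hwy h.symm) hvx hyw
    hxv.symm with h | h
  exacts [hP4 h, hC4 h]
end
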